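/- Let ω ∈ (−1,1) with ω ≠ 0, let φ_ω(x) = √(2(1−ω²)) · sech(√(1−ω²)·x), φ₀ = φ_{ω=0}, and define the quadratic form B(ξ,η,ζ) = ∫_ℝ ( |ξ'|² + |ξ|² + |η|² + ½ζ² − φ_ω²|ξ|² + 2φ_ω·ζ·(Re ξ) − 2ω·Im(η·conj(ξ)) ) dx for ξ ∈ H¹(ℝ,ℂ), η ∈ L²(ℝ,ℂ), ζ ∈ L²(ℝ,ℝ). Let F_ω = (∂_ωφ_ω, iω·∂_ωφ_ω, −2φ_ω·∂_ωφ_ω), where ∂_ωφ_ω is the partial derivative of the soliton family in ω. Then B(F_ω) = ω·(d/dω)∫φ_ω² = −(ω²/√(1−ω²))·∫φ₀², and in particular B(F_ω) < 0. -/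

import Mathlib

open Real Set MeasureTheory Complex

/-- The ground-state soliton of the KGZ standing-wave equation. -/
noncomputable def phiSol (ω : ℝ) (x : ℝ) : ℝ :=
  Real.sqrt (2 * (1 - ω ^ 2)) * (1 / Real.cosh (Real.sqrt (1 - ω ^ 2) * x))

noncomputable def dphiSol (ω : ℝ) (x : ℝ) : ℝ := deriv (fun μ : ℝ => phiSol μ x) ω

/-- The Hessian quadratic form of the action `S_ω = E - ωQ` at the standing wave,
restricted to states with vanishing fourth component. -/
noncomputable def hessianForm (ω : ℝ) (ξ η : ℝ → ℂ) (ζ : ℝ → ℝ) : ℝ :=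
  ∫ x : ℝ, (‖deriv ξ x‖ ^ 2 + ‖ξ x‖ ^ 2 + ‖η x‖ ^ 2 + (1 / 2) * (ζ x) ^ 2
    - (phiSol ω x) ^ 2 * ‖ξ x‖ ^ 2 + 2 * phiSol ω x * ζ x * (ξ x).re
    - 2 * ω * (η x * (starRingEnd ℂ) (ξ x)).im)

/-!
Along `F_ω = (u, iωu, -2φ_ω u)`, `u = ∂_ωφ_ω`, the form reduces to `∫ u'² + k² u² - 3 φ_ω² u²`
with `k = √(1 - ω²)`. Since `φ_ω(x) = √2 k sech (k x)`, we get `u(x) = -(√2 ω / k) g(k x)` for the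
dilation mode `g = (y sech y)'`, and rescaling turns the integral into `(2 ω² / k)` times the
`ω`-independent `∫ g'² + (1 - 6 sech²) g²`. The mode solves the linearized equation
`-g'' + (1 - 6 sech²) g = -2 sech`, so this integrand is the derivative of
`g g' - y sech² y - tanh y`, and the integral is `-2`. Hence `B(F_ω) = -4 ω² / k`,
while `∫ φ_ω² = 4 k`.
-/

open Filter Topology

lemma one_add_sq_le_four_mul_cosh (y : ℝ) : 1 + y ^ 2 ≤ 4 * Real.cosh y := by
  wlog hy : 0 ≤ y generalizing y
  · simpa [Real.cosh_neg] using this (-y) (by linarith)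
  rw [Real.cosh_eq]
  nlinarith [Real.quadratic_le_exp_of_nonneg hy, Real.add_one_le_exp (-y)]

lemma one_add_sq_div_cosh_sq_le (y : ℝ) :
    (1 + y ^ 2) / Real.cosh y ^ 2 ≤ 16 * (1 + y ^ 2)⁻¹ := by
  have h := one_add_sq_le_four_mul_cosh y
  rw [div_le_iff₀ (by positivity), ← div_eq_mul_inv, div_mul_eq_mul_div,
    le_div_iff₀ (by positivity)]
  nlinarith

lemma integrable_of_abs_le_mul_one_add_sq_div_cosh_sq {f : ℝ → ℝ} (hf : Continuous f) {C : ℝ}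
    (hC : ∀ y, |f y| ≤ C * ((1 + y ^ 2) / Real.cosh y ^ 2)) : Integrable f := by
  refine (integrable_inv_one_add_sq.const_mul (16 * C)).mono' hf.aestronglyMeasurable
    (Eventually.of_forall fun y => ?_)
  have hC0 : 0 ≤ C := (abs_nonneg _).trans ((hC 0).trans_eq (by simp))
  calc ‖f y‖ ≤ C * ((1 + y ^ 2) / Real.cosh y ^ 2) := hC y
    _ ≤ C * (16 * (1 + y ^ 2)⁻¹) := by gcongr; exact one_add_sq_div_cosh_sq_le y
    _ = 16 * C * (1 + y ^ 2)⁻¹ := by ring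

lemma tendsto_cocompact_of_abs_le_mul_one_add_sq_div_cosh_sq {f : ℝ → ℝ} {C : ℝ}
    (hC : ∀ y, |f y| ≤ C * ((1 + y ^ 2) / Real.cosh y ^ 2)) :
    Tendsto f (cocompact ℝ) (𝓝 0) := by
  have hlim : Tendsto (fun y : ℝ => C * (16 * (1 + y ^ 2)⁻¹)) (cocompact ℝ) (𝓝 0) := by
    have h : Tendsto (fun y : ℝ => 1 + y ^ 2) (cocompact ℝ) atTop := by
      refine tendsto_atTop_add_const_left _ 1 ?_
      exact ((tendsto_pow_atTop two_ne_zero).comp tendsto_norm_cocompact_atTop).congr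
        fun y => by simp
    simpa using ((tendsto_inv_atTop_zero.comp h).const_mul 16).const_mul C
  refine squeeze_zero_norm (fun y => ?_) hlim
  calc ‖f y‖ ≤ C * ((1 + y ^ 2) / Real.cosh y ^ 2) := hC y
    _ ≤ C * (16 * (1 + y ^ 2)⁻¹) := by
      have hC0 : 0 ≤ C := (abs_nonneg _).trans ((hC 0).trans_eq (by simp))
      gcongr; exact one_add_sq_div_cosh_sq_le y

lemma hasDerivAt_sinh_div_cosh (y : ℝ) :
    HasDerivAt (fun y => Real.sinh y / Real.cosh y) ((Real.cosh y)⁻¹ ^ 2) y := by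
  have h := (Real.hasDerivAt_sinh y).div (Real.hasDerivAt_cosh y) (Real.cosh_pos y).ne'
  rwa [← sq, ← sq, Real.cosh_sq_sub_sinh_sq, one_div, ← inv_pow] at h

lemma tendsto_sinh_div_cosh_atTop : Tendsto (fun y => Real.sinh y / Real.cosh y) atTop (𝓝 1) := by
  have h : ∀ y, Real.sinh y / Real.cosh y = 1 - Real.exp (-y) / Real.cosh y := fun y => by
    rw [eq_sub_iff_add_eq, ← add_div, div_eq_one_iff_eq (Real.cosh_pos y).ne',
      Real.cosh_eq, Real.sinh_eq]
    ring
  have hle : ∀ y, ‖Real.exp (-y) / Real.cosh y‖ ≤ Real.exp (-y) := fun y => by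
    rw [Real.norm_eq_abs, abs_of_pos (by positivity)]
    exact div_le_self (Real.exp_pos _).le (Real.one_le_cosh y)
  simpa [h] using tendsto_const_nhds.sub
    (squeeze_zero_norm hle Real.tendsto_exp_neg_atTop_nhds_zero)

lemma tendsto_sinh_div_cosh_atBot :
    Tendsto (fun y => Real.sinh y / Real.cosh y) atBot (𝓝 (-1)) := by
  simpa [Function.comp_def, neg_div] using
    (tendsto_sinh_div_cosh_atTop.comp tendsto_neg_atBot_atTop).neg

lemma integral_inv_cosh_sq : ∫ y, (Real.cosh y)⁻¹ ^ 2 = 2 := by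
  have hint : Integrable fun y => (Real.cosh y)⁻¹ ^ 2 := by
    refine integrable_of_abs_le_mul_one_add_sq_div_cosh_sq (C := 1)
      (by fun_prop (disch := exact fun y => (Real.cosh_pos y).ne')) fun y => ?_
    rw [abs_of_nonneg (by positivity), inv_pow, one_mul, ← one_div]
    gcongr; nlinarith
  rw [integral_of_hasDerivAt_of_tendsto hasDerivAt_sinh_div_cosh hint tendsto_sinh_div_cosh_atBot
    tendsto_sinh_div_cosh_atTop]
  norm_num

noncomputable def scalingMode (y : ℝ) : ℝ := (Real.cosh y - y * Real.sinh y) / Real.cosh y ^ 2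

noncomputable def scalingModeDeriv (y : ℝ) : ℝ :=
  (y * (Real.sinh y ^ 2 - 1) - 2 * Real.sinh y * Real.cosh y) / Real.cosh y ^ 3

noncomputable def scalingModeEnergyDensity (y : ℝ) : ℝ :=
  scalingModeDeriv y ^ 2 + (1 - 6 / Real.cosh y ^ 2) * scalingMode y ^ 2

lemma hasDerivAt_div_cosh_mul (κ x : ℝ) :
    HasDerivAt (fun κ => κ / Real.cosh (κ * x)) (scalingMode (κ * x)) κ := by
  have h := (hasDerivAt_id κ).fun_div ((hasDerivAt_mul_const x).cosh) (Real.cosh_pos (κ * x)).ne'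
  refine h.congr_deriv ?_
  have := (Real.cosh_pos (κ * x)).ne'
  simp only [id, scalingMode]
  field_simp

lemma hasDerivAt_scalingMode (y : ℝ) : HasDerivAt scalingMode (scalingModeDeriv y) y := by
  have hc : HasDerivAt (fun y => Real.cosh y) (Real.sinh y) y := Real.hasDerivAt_cosh y
  have hs : HasDerivAt (fun y => Real.sinh y) (Real.cosh y) y := Real.hasDerivAt_sinh y
  have h := (hc.fun_sub ((hasDerivAt_id' y).fun_mul hs)).fun_div (hc.fun_pow 2) (by positivity)
  refine h.congr_deriv ?_
  have := (Real.cosh_pos y).ne'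
  simp only [scalingModeDeriv]
  field_simp
  linear_combination (-(y * Real.cosh y)) * Real.cosh_sq_sub_sinh_sq y

lemma hasDerivAt_scalingModeDeriv (y : ℝ) :
    HasDerivAt scalingModeDeriv
      ((1 - 6 / Real.cosh y ^ 2) * scalingMode y + 2 / Real.cosh y) y := by
  have hc : HasDerivAt (fun y => Real.cosh y) (Real.sinh y) y := Real.hasDerivAt_cosh y
  have hs : HasDerivAt (fun y => Real.sinh y) (Real.cosh y) y := Real.hasDerivAt_sinh y
  have h := (((hasDerivAt_id' y).fun_mul ((hs.fun_pow 2).sub_const 1)).fun_sub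
    (((hs.const_mul 2).fun_mul hc))).fun_div (hc.fun_pow 3) (by positivity)
  refine h.congr_deriv ?_
  have := (Real.cosh_pos y).ne'
  simp only [scalingMode]
  field_simp
  linear_combination (3 * y * Real.sinh y * Real.cosh y ^ 2 - 5 * Real.cosh y ^ 3) *
    Real.cosh_sq_sub_sinh_sq y

lemma sq_scalingMode_le (y : ℝ) :
    scalingMode y ^ 2 ≤ 2 * ((1 + y ^ 2) / Real.cosh y ^ 2) := by
  have hC := Real.cosh_pos y
  have hS : Real.sinh y ^ 2 ≤ Real.cosh y ^ 2 := by nlinarith [Real.cosh_sq y]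
  have key : (Real.cosh y - y * Real.sinh y) ^ 2 ≤ 2 * (1 + y ^ 2) * Real.cosh y ^ 2 := by
    nlinarith [sq_nonneg (Real.cosh y + y * Real.sinh y),
      mul_le_mul_of_nonneg_left hS (sq_nonneg y)]
  calc scalingMode y ^ 2 = (Real.cosh y - y * Real.sinh y) ^ 2 / Real.cosh y ^ 4 := by
        rw [scalingMode, div_pow, ← pow_mul]
    _ ≤ 2 * (1 + y ^ 2) * Real.cosh y ^ 2 / Real.cosh y ^ 4 := by gcongr
    _ = 2 * ((1 + y ^ 2) / Real.cosh y ^ 2) := by field_simp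

lemma sq_scalingModeDeriv_le (y : ℝ) :
    scalingModeDeriv y ^ 2 ≤ 8 * ((1 + y ^ 2) / Real.cosh y ^ 2) := by
  have hC := Real.cosh_pos y
  have hC1 := Real.one_le_cosh y
  have hS : Real.sinh y ^ 2 = Real.cosh y ^ 2 - 1 := Real.sinh_sq y
  have key : (y * (Real.sinh y ^ 2 - 1) - 2 * Real.sinh y * Real.cosh y) ^ 2
      ≤ 8 * (1 + y ^ 2) * Real.cosh y ^ 4 := by
    have h1 : (Real.sinh y ^ 2 - 1) ^ 2 ≤ Real.cosh y ^ 4 := by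
      rw [hS]; nlinarith
    have h2 : Real.sinh y ^ 2 * Real.cosh y ^ 2 ≤ Real.cosh y ^ 4 := by
      rw [hS]; nlinarith
    nlinarith [sq_nonneg (y * (Real.sinh y ^ 2 - 1) + 2 * Real.sinh y * Real.cosh y),
      mul_le_mul_of_nonneg_left h1 (sq_nonneg y)]
  calc scalingModeDeriv y ^ 2
        = (y * (Real.sinh y ^ 2 - 1) - 2 * Real.sinh y * Real.cosh y) ^ 2 / Real.cosh y ^ 6 := by
        rw [scalingModeDeriv, div_pow, ← pow_mul]
    _ ≤ 8 * (1 + y ^ 2) * Real.cosh y ^ 4 / Real.cosh y ^ 6 := by gcongr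
    _ = 8 * ((1 + y ^ 2) / Real.cosh y ^ 2) := by field_simp

lemma abs_scalingModeEnergyDensity_le (y : ℝ) :
    |scalingModeEnergyDensity y| ≤ 10 * ((1 + y ^ 2) / Real.cosh y ^ 2) := by
  have h6 : 0 ≤ 6 / Real.cosh y ^ 2 := by positivity
  have h6' : 6 / Real.cosh y ^ 2 ≤ 6 :=
    div_le_self (by norm_num) (one_le_pow₀ (Real.one_le_cosh y))
  have h0 := sq_scalingMode_le y
  have h1 := sq_scalingModeDeriv_le y
  rw [scalingModeEnergyDensity, abs_le]
  constructor <;> nlinarith [sq_nonneg (scalingMode y), sq_nonneg (scalingModeDeriv y)]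

lemma continuous_scalingModeEnergyDensity : Continuous scalingModeEnergyDensity := by
  have h0 : Continuous scalingMode :=
    continuous_iff_continuousAt.2 fun y => (hasDerivAt_scalingMode y).continuousAt
  have h1 : Continuous scalingModeDeriv :=
    continuous_iff_continuousAt.2 fun y => (hasDerivAt_scalingModeDeriv y).continuousAt
  unfold scalingModeEnergyDensity
  fun_prop (disch := exact fun y => (pow_pos (Real.cosh_pos y) 2).ne')

lemma integral_scalingModeEnergyDensity : ∫ y, scalingModeEnergyDensity y = -2 := by
  have hint : Integrable scalingModeEnergyDensity :=
    integrable_of_abs_le_mul_one_add_sq_div_cosh_sq continuous_scalingModeEnergyDensity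
      abs_scalingModeEnergyDensity_le
  have hH : ∀ y, HasDerivAt
      (fun y => scalingMode y * scalingModeDeriv y - y / Real.cosh y ^ 2
        - Real.sinh y / Real.cosh y) (scalingModeEnergyDensity y) y := by
    intro y
    have hC := (Real.cosh_pos y).ne'
    have h := (((hasDerivAt_scalingMode y).fun_mul (hasDerivAt_scalingModeDeriv y)).fun_sub
      ((hasDerivAt_id' y).fun_div ((Real.hasDerivAt_cosh y).fun_pow 2) (by positivity))).fun_sub
      (hasDerivAt_sinh_div_cosh y)
    refine h.congr_deriv ?_
    simp only [scalingModeEnergyDensity, scalingMode]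
    field_simp
    ring
  have hdecay : Tendsto (fun y => scalingMode y * scalingModeDeriv y - y / Real.cosh y ^ 2)
      (cocompact ℝ) (𝓝 0) := by
    refine tendsto_cocompact_of_abs_le_mul_one_add_sq_div_cosh_sq (C := 6) fun y => ?_
    have h0 := sq_scalingMode_le y
    have h1 := sq_scalingModeDeriv_le y
    have hy : |y / Real.cosh y ^ 2| ≤ (1 + y ^ 2) / Real.cosh y ^ 2 := by
      rw [abs_div, abs_of_pos (pow_pos (Real.cosh_pos y) 2)]
      gcongr
      nlinarith [abs_nonneg y, sq_abs y, sq_nonneg (|y| - 1)]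
    have hprod : |scalingMode y * scalingModeDeriv y| ≤ 5 * ((1 + y ^ 2) / Real.cosh y ^ 2) := by
      rw [abs_le]
      constructor <;> nlinarith [sq_nonneg (scalingMode y + scalingModeDeriv y),
        sq_nonneg (scalingMode y - scalingModeDeriv y)]
    calc _ ≤ |scalingMode y * scalingModeDeriv y| + |y / Real.cosh y ^ 2| := abs_sub _ _
      _ ≤ 6 * ((1 + y ^ 2) / Real.cosh y ^ 2) := by linarith
  have htop := (hdecay.mono_left atTop_le_cocompact).sub tendsto_sinh_div_cosh_atTop
  have hbot := (hdecay.mono_left atBot_le_cocompact).sub tendsto_sinh_div_cosh_atBot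
  rw [integral_of_hasDerivAt_of_tendsto hH hint hbot htop]
  norm_num

lemma phiSol_eq (μ x : ℝ) :
    phiSol μ x = √2 * (√(1 - μ ^ 2) / Real.cosh (√(1 - μ ^ 2) * x)) := by
  rw [phiSol, Real.sqrt_mul zero_le_two, mul_one_div, mul_div_assoc]

lemma phiSol_sq (μ x : ℝ) :
    phiSol μ x ^ 2 = 2 * √(1 - μ ^ 2) ^ 2 * (Real.cosh (√(1 - μ ^ 2) * x))⁻¹ ^ 2 := by
  rw [phiSol_eq, mul_pow, div_pow, Real.sq_sqrt zero_le_two, inv_pow]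
  ring

lemma integral_phiSol_sq (μ : ℝ) : ∫ x, phiSol μ x ^ 2 = 4 * √(1 - μ ^ 2) := by
  have hscale := Measure.integral_comp_mul_left (fun y => (Real.cosh y)⁻¹ ^ 2) √(1 - μ ^ 2)
  simp only [phiSol_sq, integral_const_mul, hscale, integral_inv_cosh_sq, smul_eq_mul, abs_inv,
    abs_of_nonneg (Real.sqrt_nonneg _)]
  rcases eq_or_ne √(1 - μ ^ 2) 0 with h | h
  · simp [h]
  · field_simp
    ring

lemma hasDerivAt_integral_phiSol_sq {μ : ℝ} (hμ : μ ^ 2 < 1) :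
    HasDerivAt (fun μ => ∫ x, phiSol μ x ^ 2) (-(4 * μ / √(1 - μ ^ 2))) μ := by
  have hk : √(1 - μ ^ 2) ≠ 0 := (Real.sqrt_pos.2 (by linarith)).ne'
  simp only [integral_phiSol_sq]
  refine ((((hasDerivAt_pow 2 μ).const_sub 1).sqrt (by linarith)).const_mul 4).congr_deriv ?_
  field_simp
  ring

lemma hasDerivAt_phiSol {μ : ℝ} (hμ : μ ^ 2 < 1) (x : ℝ) :
    HasDerivAt (fun μ => phiSol μ x)
      (-(√2 * μ / √(1 - μ ^ 2)) * scalingMode (√(1 - μ ^ 2) * x)) μ := by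
  have hk : √(1 - μ ^ 2) ≠ 0 := (Real.sqrt_pos.2 (by linarith)).ne'
  simp only [phiSol_eq]
  have hk' := ((hasDerivAt_pow 2 μ).const_sub 1).sqrt (by linarith)
  refine (((hasDerivAt_div_cosh_mul _ x).comp μ hk').const_mul √2).congr_deriv ?_
  field_simp
  ring

lemma dphiSol_eq {μ : ℝ} (hμ : μ ^ 2 < 1) :
    dphiSol μ = fun x => -(√2 * μ / √(1 - μ ^ 2)) * scalingMode (√(1 - μ ^ 2) * x) :=
  funext fun x => (hasDerivAt_phiSol hμ x).deriv

lemma hessianForm_ofReal (ω : ℝ) {u u' : ℝ → ℝ} (hu : ∀ x, HasDerivAt u (u' x) x) :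
    hessianForm ω (fun x => (u x : ℂ)) (fun x => Complex.I * ω * u x)
        (fun x => -2 * phiSol ω x * u x)
      = ∫ x, (u' x ^ 2 + (1 - ω ^ 2) * u x ^ 2 - 3 * phiSol ω x ^ 2 * u x ^ 2) := by
  unfold hessianForm
  congr 1
  ext x
  rw [(hu x).ofReal_comp.deriv]
  simp only [norm_mul, Complex.norm_I, Complex.norm_real, Real.norm_eq_abs, mul_pow, sq_abs,
    Complex.conj_ofReal, Complex.ofReal_re, Complex.mul_im, Complex.mul_re, Complex.I_re,
    Complex.I_im, Complex.ofReal_im]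
  ring

lemma hessianForm_dphiSol {ω : ℝ} (hω : ω ^ 2 < 1) :
    hessianForm ω (fun x => ((dphiSol ω x : ℝ) : ℂ))
        (fun x => Complex.I * (ω : ℂ) * (dphiSol ω x : ℂ))
        (fun x => -2 * phiSol ω x * dphiSol ω x)
      = -(4 * ω ^ 2 / √(1 - ω ^ 2)) := by
  have hk : 0 < √(1 - ω ^ 2) := Real.sqrt_pos.2 (by linarith)
  have hk2 : √(1 - ω ^ 2) ^ 2 = 1 - ω ^ 2 := Real.sq_sqrt (by linarith)
  set k := √(1 - ω ^ 2) with hk_def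
  set a := -(√2 * ω / k)
  have ha : a ^ 2 * k ^ 2 = 2 * ω ^ 2 := by
    rw [neg_sq, div_pow, mul_pow, Real.sq_sqrt zero_le_two]
    field_simp
  have hD : ∀ x, HasDerivAt (dphiSol ω) (a * (scalingModeDeriv (k * x) * k)) x := by
    rw [dphiSol_eq hω]
    exact fun x => ((hasDerivAt_scalingMode (k * x)).comp x (hasDerivAt_const_mul k)).const_mul a
  have hintegrand : ∀ x, (a * (scalingModeDeriv (k * x) * k)) ^ 2 + (1 - ω ^ 2) * dphiSol ω x ^ 2
      - 3 * phiSol ω x ^ 2 * dphiSol ω x ^ 2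
      = a ^ 2 * k ^ 2 * scalingModeEnergyDensity (k * x) := by
    intro x
    have := (Real.cosh_pos (k * x)).ne'
    rw [dphiSol_eq hω, phiSol_sq, ← hk_def, scalingModeEnergyDensity, ← hk2]
    field_simp
    rw [Real.sq_sqrt zero_le_two]
    linear_combination (scalingMode (k * x) ^ 2 * (6 - Real.cosh (k * x) ^ 2)) * ha
  have hscale := Measure.integral_comp_mul_left scalingModeEnergyDensity k
  rw [hessianForm_ofReal ω hD]
  clear_value a k
  simp only [hintegrand, integral_const_mul, hscale, integral_scalingModeEnergyDensity,
    smul_eq_mul, abs_inv, abs_of_pos hk]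
  field_simp
  linear_combination -2 * ha

/-- For `ω ≠ 0`, the Hessian of the action is negative in the direction
`F_ω = (∂_ωφ_ω, iω∂_ωφ_ω, -2φ_ω∂_ωφ_ω)`:
`B(F_ω) = ω·(d/dω)∫φ_ω² = -(ω²/√(1-ω²))·∫φ₀² < 0`. -/
theorem hessianForm_neg_direction (ω : ℝ) (hω : ω ∈ Ioo (-1 : ℝ) 1) (hω0 : ω ≠ 0) :
    hessianForm ω (fun x => ((dphiSol ω x : ℝ) : ℂ))
        (fun x => Complex.I * (ω : ℂ) * (dphiSol ω x : ℂ))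
        (fun x => -2 * phiSol ω x * dphiSol ω x)
      = ω * deriv (fun μ : ℝ => ∫ x : ℝ, (phiSol μ x) ^ 2) ω ∧
    hessianForm ω (fun x => ((dphiSol ω x : ℝ) : ℂ))
        (fun x => Complex.I * (ω : ℂ) * (dphiSol ω x : ℂ))
        (fun x => -2 * phiSol ω x * dphiSol ω x)
      = -(ω ^ 2 / Real.sqrt (1 - ω ^ 2)) * (∫ x : ℝ, (phiSol 0 x) ^ 2) ∧
    hessianForm ω (fun x => ((dphiSol ω x : ℝ) : ℂ))
        (fun x => Complex.I * (ω : ℂ) * (dphiSol ω x : ℂ))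
        (fun x => -2 * phiSol ω x * dphiSol ω x) < 0 := by
  have hω2 : ω ^ 2 < 1 := (sq_lt_one_iff_abs_lt_one ω).2 (abs_lt.2 hω)
  have hk : 0 < √(1 - ω ^ 2) := Real.sqrt_pos.2 (by linarith)
  rw [hessianForm_dphiSol hω2]
  refine ⟨?_, ?_, ?_⟩
  · rw [(hasDerivAt_integral_phiSol_sq hω2).deriv]
    ring
  · rw [integral_phiSol_sq]
    norm_num
    ring
  · exact neg_neg_of_pos (div_pos (by positivity) hk)
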